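/- arXiv:1607.00947 — 6 statements merged into one kernel-verified Lean document; each statement's English description precedes it below -/
import Mathlib

section
/- The characteristic polynomial of the 3×3 real matrix A_c^LS factors as (X − γu)·(X − u)², i.e. the eigenvalues of A_c^LS are γu and u, with u having algebraic multiplicity 2. -/
open Polynomial

/-- The Liou–Steffen convection flux Jacobian of the 1-D Euler system. -/
noncomputable def AcLS (u E γ : ℝ) : Matrix (Fin 3) (Fin 3) ℝ :=
  !![0, 1, 0;
     -u^2, 2*u, 0;
     -γ*u*E + (γ-1)*u^3, γ*E - (3/2)*(γ-1)*u^2, γ*u]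

/-- The characteristic polynomial of `A_c^LS` factors as `(X - γu)·(X - u)²`. -/
theorem charpoly_AcLS (u E γ : ℝ) :
    (AcLS u E γ).charpoly = (X - C (γ*u)) * (X - C u)^2 := by
  rw [Matrix.charpoly, AcLS, Matrix.charmatrix]
  simp [Matrix.det_fin_three, Matrix.of_apply, map_ofNat]
  ring
end

section
/- If u ≠ 0 and γ ≠ 1, then the eigenspace ker(A_c^LS − u·I) of the 3×3 real matrix A_c^LS for the eigenvalue u is exactly the span of the single vector (1, u, u²/2); in particular, even though u has algebraic multiplicity 2, its geometric multiplicity is 1, so A_c^LS does not have a complete set of linearly independent eigenvectors (the convection subsystem is weakly hyperbolic). Moreover (0, 0, 1) spans the eigenspace for the eigenvalue γu. -/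
/-- For `u ≠ 0`, `γ ≠ 1`, the eigenspace of `A_c^LS` for the eigenvalue `u` is exactly the
span of `(1, u, u²/2)` (geometric multiplicity 1, so the convection subsystem is weakly
hyperbolic), while `(0,0,1)` spans the eigenspace for the eigenvalue `γu`. -/
theorem eigenspaces_AcLS (u E γ : ℝ) (hu : u ≠ 0) (hγ : γ ≠ 1) :
    (∀ x : Fin 3 → ℝ, (AcLS u E γ).mulVec x = u • x ↔
      ∃ c : ℝ, x = c • ![1, u, u^2/2]) ∧
    (∀ x : Fin 3 → ℝ, (AcLS u E γ).mulVec x = (γ*u) • x ↔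
      ∃ c : ℝ, x = c • ![0, 0, 1]) := by
  have hγ' : γ - 1 ≠ 0 := sub_ne_zero.mpr hγ
  constructor
  · intro x
    constructor
    · intro h
      have h0 := congrFun h 0
      have h2 := congrFun h 2
      simp [AcLS, Matrix.mulVec, dotProduct, Fin.sum_univ_three] at h0 h2
      have key : (γ - 1) * u * (x 2 - x 0 * (u^2/2)) = 0 := by
        linear_combination h2 - (γ*E - (3/2)*(γ-1)*u^2) * h0
      have hx2 : x 2 = x 0 * (u^2/2) := by
        have := (mul_eq_zero.mp key).resolve_left (mul_ne_zero hγ' hu)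
        linarith
      refine ⟨x 0, funext fun i => ?_⟩
      fin_cases i
      · simp
      · show x 1 = x 0 • ![(1:ℝ), u, u^2/2] 1
        simp only [Pi.smul_apply, Matrix.cons_val_one, Matrix.head_cons, Matrix.cons_val_zero, smul_eq_mul]
        linear_combination h0
      · show x 2 = x 0 • ![(1:ℝ), u, u^2/2] 2
        simpa [smul_eq_mul] using hx2
    · rintro ⟨c, rfl⟩
      funext i
      fin_cases i <;>
        simp [AcLS, Matrix.mulVec, dotProduct, Fin.sum_univ_three,
          Pi.smul_apply, smul_eq_mul] <;> ring
  · intro x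
    constructor
    · intro h
      have h0 := congrFun h 0
      have h1 := congrFun h 1
      simp [AcLS, Matrix.mulVec, dotProduct, Fin.sum_univ_three] at h0 h1
      have key : (γ - 1)^2 * u^2 * x 0 = 0 := by
        linear_combination -h1 + (2*u - γ*u) * h0
      have hx0 : x 0 = 0 := by
        have h2 : (γ - 1)^2 * u^2 ≠ 0 := by positivity
        exact (mul_eq_zero.mp key).resolve_left h2
      have hx1 : x 1 = 0 := by rw [hx0] at h0; linarith [h0]
      refine ⟨x 2, funext fun i => ?_⟩
      fin_cases i <;> simp [Pi.smul_apply, smul_eq_mul, hx0, hx1]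
    · rintro ⟨c, rfl⟩
      funext i
      fin_cases i <;>
        simp [AcLS, Matrix.mulVec, dotProduct, Fin.sum_univ_three,
          Pi.smul_apply, smul_eq_mul]
end

section
/- Let ρ_L, ρ_R > 0 and u_L, u_R, η_L, η_R be real. Define ū = (√ρ_L·u_L + √ρ_R·u_R)/(√ρ_L + √ρ_R), ρ̄ = √(ρ_L ρ_R), and η̄ = (√ρ_L·η_L + √ρ_R·η_R)/(√ρ_L + √ρ_R). Then (ρ_R u_R η_R − ρ_L u_L η_L) − ū·(ρ_R η_R − ρ_L η_L) = ρ̄·η̄·(u_R − u_L). In particular, taking η = a² (the squared sound speed), the Roe-averaged sound speed defined by ā² = (√ρ_L·a_L² + √ρ_R·a_R²)/(√ρ_L + √ρ_R) satisfies Δ(a²ρu) − ū·Δ(a²ρ) = ā²·ρ̄·Δu. -/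
lemma roe_aux (sL sR uL uR ηL ηR : ℝ) (hL : 0 < sL) (hR : 0 < sR) :
    (sR^2 * uR * ηR - sL^2 * uL * ηL) -
      (sL * uL + sR * uR) / (sL + sR) * (sR^2 * ηR - sL^2 * ηL)
      = (sL * sR) * ((sL * ηL + sR * ηR) / (sL + sR)) * (uR - uL) := by
  have h : sL + sR ≠ 0 := by positivity
  field_simp
  ring

/-- For positive densities and any flow variable `η`, the Roe averages
`ū, ρ̄, η̄` satisfy `Δ(ρuη) − ū·Δ(ρη) = ρ̄·η̄·Δu` exactly; in particular, with `η = a²`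
the Roe-averaged sound speed `ā² = (√ρ_L·a_L² + √ρ_R·a_R²)/(√ρ_L + √ρ_R)` satisfies
`Δ(a²ρu) − ū·Δ(a²ρ) = ā²·ρ̄·Δu`. -/
theorem roe_average_flow_variable (ρL ρR uL uR ηL ηR aL aR : ℝ)
    (hL : 0 < ρL) (hR : 0 < ρR) :
    let ubar := (Real.sqrt ρL * uL + Real.sqrt ρR * uR) / (Real.sqrt ρL + Real.sqrt ρR)
    let ρbar := Real.sqrt (ρL * ρR)
    let ηbar := (Real.sqrt ρL * ηL + Real.sqrt ρR * ηR) / (Real.sqrt ρL + Real.sqrt ρR)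
    let asqbar := (Real.sqrt ρL * aL^2 + Real.sqrt ρR * aR^2) / (Real.sqrt ρL + Real.sqrt ρR)
    ((ρR * uR * ηR - ρL * uL * ηL) - ubar * (ρR * ηR - ρL * ηL) = ρbar * ηbar * (uR - uL)) ∧
    ((aR^2 * ρR * uR - aL^2 * ρL * uL) - ubar * (aR^2 * ρR - aL^2 * ρL)
      = asqbar * ρbar * (uR - uL)) := by
  intro ubar ρbar ηbar asqbar
  have hsL : 0 < Real.sqrt ρL := Real.sqrt_pos.mpr hL
  have hsR : 0 < Real.sqrt ρR := Real.sqrt_pos.mpr hR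
  have hL2 : Real.sqrt ρL ^ 2 = ρL := Real.sq_sqrt hL.le
  have hR2 : Real.sqrt ρR ^ 2 = ρR := Real.sq_sqrt hR.le
  have hprod : Real.sqrt (ρL * ρR) = Real.sqrt ρL * Real.sqrt ρR := Real.sqrt_mul hL.le ρR
  constructor
  · have := roe_aux (Real.sqrt ρL) (Real.sqrt ρR) uL uR ηL ηR hsL hsR
    rw [hL2, hR2] at this
    simpa [ubar, ρbar, ηbar, hprod] using this
  · have := roe_aux (Real.sqrt ρL) (Real.sqrt ρR) uL uR (aL^2) (aR^2) hsL hsR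
    rw [hL2, hR2] at this
    rw [show aR ^ 2 * ρR * uR = ρR * uR * aR ^ 2 by ring,
        show aL ^ 2 * ρL * uL = ρL * uL * aL ^ 2 by ring,
        show aR ^ 2 * ρR = ρR * aR ^ 2 by ring,
        show aL ^ 2 * ρL = ρL * aL ^ 2 by ring,
        show asqbar * ρbar = ρbar * asqbar by ring]
    simpa [ubar, ρbar, asqbar, hprod] using this
end

section
/- Let γ > 1, ρ_L, ρ_R > 0, u_L, u_R, p_L, p_R real, and ā > 0. Define ū = (√ρ_L·u_L + √ρ_R·u_R)/(√ρ_L + √ρ_R), ρ̄ = √(ρ_L ρ_R), Δρ = ρ_R − ρ_L, Δu = u_R − u_L, Δp = p_R − p_L, Δ(ρu) = ρ_R u_R − ρ_L u_L, and Δ(ρE) = (p_R/(γ−1) + ρ_R u_R²/2) − (p_L/(γ−1) + ρ_L u_L²/2). Define the wave strengths ᾱ₁ = ρ̄Δu/2 − √(γ/(γ−1))·Δp/(2ā), ᾱ₂ = Δρ, ᾱ₃ = ρ̄Δu/2 + √(γ/(γ−1))·Δp/(2ā), and the eigenvectors R̄₁ = (0, 1, ū − ā/√(γ(γ−1)))ᵀ,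 R̄₂ = (1, ū, ū²/2)ᵀ, R̄₃ = (0, 1, ū + ā/√(γ(γ−1)))ᵀ. Then the jump vector decomposes exactly as (Δρ, Δ(ρu), Δ(ρE))ᵀ = ᾱ₁R̄₁ + ᾱ₂R̄₂ + ᾱ₃R̄₃. -/
/-- Exact wave-strength decomposition of the jump vector for the Zha–Bilgen pressure
subsystem: `(Δρ, Δ(ρu), Δ(ρE))ᵀ = ᾱ₁R̄₁ + ᾱ₂R̄₂ + ᾱ₃R̄₃`. -/
theorem zb_pressure_jump_decomposition (γ ρL ρR uL uR pL pR abar : ℝ)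
    (hγ : 1 < γ) (hL : 0 < ρL) (hR : 0 < ρR) (ha : 0 < abar) :
    let ubar := (Real.sqrt ρL * uL + Real.sqrt ρR * uR) / (Real.sqrt ρL + Real.sqrt ρR)
    let ρbar := Real.sqrt (ρL * ρR)
    let Δρ := ρR - ρL
    let Δu := uR - uL
    let Δp := pR - pL
    let Δρu := ρR * uR - ρL * uL
    let ΔρE := (pR/(γ-1) + ρR * uR^2/2) - (pL/(γ-1) + ρL * uL^2/2)
    let α₁ := ρbar * Δu / 2 - Real.sqrt (γ/(γ-1)) * Δp / (2*abar)
    let α₂ := Δρ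
    let α₃ := ρbar * Δu / 2 + Real.sqrt (γ/(γ-1)) * Δp / (2*abar)
    let R₁ : Fin 3 → ℝ := ![0, 1, ubar - abar / Real.sqrt (γ*(γ-1))]
    let R₂ : Fin 3 → ℝ := ![1, ubar, ubar^2/2]
    let R₃ : Fin 3 → ℝ := ![0, 1, ubar + abar / Real.sqrt (γ*(γ-1))]
    ![Δρ, Δρu, ΔρE] = α₁ • R₁ + α₂ • R₂ + α₃ • R₃ := by
  intro ubar ρbar Δρ Δu Δp Δρu ΔρE α₁ α₂ α₃ R₁ R₂ R₃
  have hγ1 : (0:ℝ) < γ - 1 := by linarith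
  have hsLpos : 0 < Real.sqrt ρL := Real.sqrt_pos.mpr hL
  have hsRpos : 0 < Real.sqrt ρR := Real.sqrt_pos.mpr hR
  have hρbar : Real.sqrt (ρL * ρR) = Real.sqrt ρL * Real.sqrt ρR := Real.sqrt_mul hL.le ρR
  simp only [R₁, R₂, R₃, α₁, α₂, α₃, ubar, ρbar, Δρ, Δu, Δp, Δρu, ΔρE, hρbar]
  set sL := Real.sqrt ρL with hsLdef
  set sR := Real.sqrt ρR with hsRdef
  have hsL : sL ^ 2 = ρL := Real.sq_sqrt hL.le
  have hsR : sR ^ 2 = ρR := Real.sq_sqrt hR.le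
  set d := Real.sqrt (γ*(γ-1)) with hddef
  set c := Real.sqrt (γ/(γ-1)) with hcdef
  have hdpos : 0 < d := Real.sqrt_pos.mpr (by positivity)
  have hd2 : d ^ 2 = γ * (γ - 1) := Real.sq_sqrt (by positivity)
  have hcd : c * d = γ := by
    rw [hcdef, hddef, ← Real.sqrt_mul (by positivity)]
    rw [show γ/(γ-1) * (γ*(γ-1)) = γ^2 by field_simp]
    exact Real.sqrt_sq (by linarith)
  have hs : 0 < sL + sR := by linarith
  rw [← hsL, ← hsR]
  simp only [Matrix.smul_cons, smul_eq_mul, Matrix.smul_empty, Matrix.add_cons,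
    Matrix.head_cons, Matrix.tail_cons, Matrix.empty_add_empty]
  refine congrArg₂ Matrix.vecCons (by ring) (congrArg₂ Matrix.vecCons ?_ (congrArg₂ Matrix.vecCons ?_ rfl))
  · field_simp
    ring
  · rw [show c = γ / d by field_simp; linarith [hcd]]
    field_simp
    ring_nf
    linear_combination (2*abar*(pR-pL)*(sL+sR)^2) * hd2
end

section
/- Let γ > 1, ρ_L, ρ_R > 0, u_L, u_R, p_L, p_R real, and let x₁ be any real constant. Define ū = (√ρ_L·u_L + √ρ_R·u_R)/(√ρ_L + √ρ_R), ρ̄ = √(ρ_L ρ_R), Δρ = ρ_R − ρ_L, Δu = u_R − u_L, Δp = p_R − p_L, Δ(ρu) = ρ_R u_R − ρ_L u_L, and Δ(ρE) = (p_R/(γ−1) + ρ_R u_R²/2) − (p_L/(γ−1) + ρ_L u_L²/2). Define wave strengths ᾱ₁ = Δp/(γ−1), ᾱ₂ = Δρ − x₁·ρ̄Δu, ᾱ₃ = ρ̄Δu and the generalized eigenvectors R̄₁ = (0, 0, 1)ᵀ, R̄₂ = (1, ū, ū²/2)ᵀ, R̄₃ = (x₁, 1 + ū·x₁, ū + (ū²/2)x₁)ᵀ.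 Then the jump vector decomposes exactly as (Δρ, Δ(ρu), Δ(ρE))ᵀ = ᾱ₁R̄₁ + ᾱ₂R̄₂ + ᾱ₃R̄₃. -/
/-- Exact wave-strength decomposition of the jump vector for the Toro–Vázquez convection
subsystem in terms of the eigenvectors and the generalized eigenvector (with free
parameter `x₁`): `(Δρ, Δ(ρu), Δ(ρE))ᵀ = ᾱ₁R̄₁ + ᾱ₂R̄₂ + ᾱ₃R̄₃`. -/
theorem tv_convection_jump_decomposition (γ ρL ρR uL uR pL pR x₁ : ℝ)
    (hγ : 1 < γ) (hL : 0 < ρL) (hR : 0 < ρR) :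
    let ubar := (Real.sqrt ρL * uL + Real.sqrt ρR * uR) / (Real.sqrt ρL + Real.sqrt ρR)
    let ρbar := Real.sqrt (ρL * ρR)
    let Δρ := ρR - ρL
    let Δu := uR - uL
    let Δp := pR - pL
    let Δρu := ρR * uR - ρL * uL
    let ΔρE := (pR/(γ-1) + ρR * uR^2/2) - (pL/(γ-1) + ρL * uL^2/2)
    let α₁ := Δp / (γ-1)
    let α₂ := Δρ - x₁ * (ρbar * Δu)
    let α₃ := ρbar * Δu
    let R₁ : Fin 3 → ℝ := ![0, 0, 1]
    let R₂ : Fin 3 → ℝ := ![1, ubar, ubar^2/2]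
    let R₃ : Fin 3 → ℝ := ![x₁, 1 + ubar*x₁, ubar + (ubar^2/2)*x₁]
    ![Δρ, Δρu, ΔρE] = α₁ • R₁ + α₂ • R₂ + α₃ • R₃ := by
  have ha : (0:ℝ) < Real.sqrt ρL := Real.sqrt_pos.2 hL
  have hb : (0:ℝ) < Real.sqrt ρR := Real.sqrt_pos.2 hR
  have hab : Real.sqrt (ρL * ρR) = Real.sqrt ρL * Real.sqrt ρR := Real.sqrt_mul hL.le _
  set a := Real.sqrt ρL with hA
  set b := Real.sqrt ρR with hB
  have ha2 : a ^ 2 = ρL := Real.sq_sqrt hL.le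
  have hb2 : b ^ 2 = ρR := Real.sq_sqrt hR.le
  have hs : a + b ≠ 0 := by positivity
  have hγ' : γ - 1 ≠ 0 := by linarith
  simp only [hab]
  rw [← ha2, ← hb2]
  funext i
  fin_cases i <;>
    simp only [Pi.add_apply, Pi.smul_apply, smul_eq_mul, Matrix.cons_val_zero,
      Matrix.cons_val_one, Matrix.head_cons, Matrix.cons_val_two, Matrix.tail_cons,
        Fin.reduceFinMk, Fin.isValue, Matrix.cons_val] <;>
    field_simp <;> ring
end

section
/- Let u, v, E, n_x, n_y be real with n_x² + n_y² = 1, and set u⊥ = u·n_x + v·n_y. Then the 4×4 real matrix A_c^ZB satisfies A_c^ZB·X₁ = u⊥·X₁ for X₁ = (1, u, v, E)ᵀ, and for every vector X₂ = (x₁, x₂, x₃, x₄)ᵀ whose components satisfy n_x·x₂ + n_y·x₃ = 1 + u⊥·x₁, one has A_c^ZB·X₂ = u⊥·X₂ + X₁; i.e., X₁ is a generalized eigenvector forming a Jordan chain of length two with any such X₂ at the eigenvalue u⊥. -/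
/-- The 2-D Zha–Bilgen convection flux Jacobian in the direction of the unit normal
`(n_x, n_y)`, with `u⊥ = u·n_x + v·n_y`. -/
noncomputable def AcZB2D (u v E nx ny : ℝ) : Matrix (Fin 4) (Fin 4) ℝ :=
  let uP := u*nx + v*ny
  !![0, nx, ny, 0;
     -u*uP, uP + u*nx, u*ny, 0;
     -v*uP, v*nx, uP + v*ny, 0;
     -E*uP, E*nx, E*ny, uP]

/-- For a unit normal `(n_x, n_y)`, the vector `X₁ = (1, u, v, E)` is an eigenvector of
the 2-D `A_c^ZB` for the eigenvalue `u⊥ = u·n_x + v·n_y`, and every vector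
`X₂ = (x₁, x₂, x₃, x₄)` with `n_x·x₂ + n_y·x₃ = 1 + u⊥·x₁` satisfies
`A_c^ZB·X₂ = u⊥·X₂ + X₁`, i.e. forms a Jordan chain of length two with `X₁`. -/
theorem jordan_chain_AcZB2D (u v E nx ny : ℝ) (hn : nx^2 + ny^2 = 1) :
    (AcZB2D u v E nx ny).mulVec ![1, u, v, E] = (u*nx + v*ny) • ![1, u, v, E] ∧
    ∀ x₁ x₂ x₃ x₄ : ℝ, nx*x₂ + ny*x₃ = 1 + (u*nx + v*ny)*x₁ →
      (AcZB2D u v E nx ny).mulVec ![x₁, x₂, x₃, x₄] =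
        (u*nx + v*ny) • ![x₁, x₂, x₃, x₄] + ![1, u, v, E] := by
  constructor
  · funext i
    fin_cases i <;>
      simp [AcZB2D, Matrix.mulVec, dotProduct, Fin.sum_univ_four] <;> ring
  · intro x₁ x₂ x₃ x₄ h
    funext i
    fin_cases i <;>
      simp [AcZB2D, Matrix.mulVec, dotProduct, Fin.sum_univ_four]
    · linear_combination h
    · linear_combination u * h
    · linear_combination v * h
    · linear_combination E * h
end
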